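/- Let G = (V, E, w) be a weighted graph with shortest-path metric d, let S ⊆ V, and let Y ⊆ V with S ⊆ Y. Form the graph G^S[Y] on vertex set Y by keeping all edges of G within Y and additionally, for each pair of distinct i, j ∈ S connected in G, adding an edge of weight d_G(i, j) (keeping the minimum if an edge already exists). If (A, S, B) is a separation of G and Y = A ∪ S, then for all u, v ∈ Y, the shortest-path distance in G^S[Y] between u and v equals d_G(u, v). -/

import Mathlib

open scoped Classical

open ENNReal

noncomputable def walkWeight {V : Type*} {G : SimpleGraph V} (w : V → V → ℝ≥0∞)
    {u v : V} (p : G.Walk u v) : ℝ≥0∞ :=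
  (p.darts.map (fun d => w d.toProd.1 d.toProd.2)).sum

noncomputable def spDist {V : Type*} (G : SimpleGraph V) (w : V → V → ℝ≥0∞)
    (u v : V) : ℝ≥0∞ :=
  ⨅ p : G.Walk u v, walkWeight w p

/-- The graph `G^S[Y]`: vertex set `Y`, edges of `G` within `Y`, plus an edge between
any two distinct vertices of `S` that are connected in `G`. -/
def modGraph {V : Type*} (G : SimpleGraph V) (S Y : Set V) : SimpleGraph Y where
  Adj x y := x ≠ y ∧ (G.Adj x y ∨ ((x : V) ∈ S ∧ (y : V) ∈ S ∧ G.Reachable x y))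
  symm := by
    constructor
    rintro x y ⟨hne, h | ⟨hx, hy, hr⟩⟩
    · exact ⟨hne.symm, Or.inl h.symm⟩
    · exact ⟨hne.symm, Or.inr ⟨hy, hx, hr.symm⟩⟩
  loopless := by constructor; rintro x ⟨hne, _⟩; exact hne rfl

/-- Weights of `G^S[Y]`: edges between two vertices of `S` get the shortest-path
distance in `G` (which is the minimum of `d_G` and the original weight, if any),
other edges keep their original weight. -/
noncomputable def modWeight {V : Type*} (G : SimpleGraph V) (w : V → V → ℝ≥0∞)
    (S Y : Set V) : Y → Y → ℝ≥0∞ :=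
  fun x y => if (x : V) ∈ S ∧ (y : V) ∈ S then spDist G w x y else w x y

section Aux

variable {V : Type*} {G : SimpleGraph V} {w : V → V → ℝ≥0∞}

lemma walkWeight_nil {u : V} : walkWeight w (SimpleGraph.Walk.nil : G.Walk u u) = 0 := rfl

lemma walkWeight_cons {u x v : V} (h : G.Adj u x) (p : G.Walk x v) :
    walkWeight w (SimpleGraph.Walk.cons h p) = w u x + walkWeight w p := by
  simp [walkWeight]

lemma walkWeight_append {u x v : V} (p : G.Walk u x) (q : G.Walk x v) :
    walkWeight w (p.append q) = walkWeight w p + walkWeight w q := by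
  simp [walkWeight]

lemma spDist_le {u v : V} (p : G.Walk u v) : spDist G w u v ≤ walkWeight w p :=
  iInf_le _ p

lemma spDist_le_weight {u v : V} (h : G.Adj u v) : spDist G w u v ≤ w u v := by
  have := spDist_le (w := w) h.toWalk
  simpa [SimpleGraph.Adj.toWalk, walkWeight_cons, walkWeight_nil] using this

lemma spDist_triangle (a b c : V) :
    spDist G w a c ≤ spDist G w a b + spDist G w b c := by
  have key : ∀ (p : G.Walk a b) (q : G.Walk b c),
      spDist G w a c ≤ walkWeight w p + walkWeight w q := fun p q => by
    rw [← walkWeight_append]; exact spDist_le _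
  simp only [spDist] at key ⊢
  rw [ENNReal.iInf_add]
  refine le_iInf fun p => ?_
  rw [ENNReal.add_iInf]
  exact le_iInf fun q => key p q

lemma spDist_le_add {a b c : V} (h : G.Adj a b) :
    spDist G w a c ≤ w a b + spDist G w b c :=
  (spDist_triangle a b c).trans (add_le_add (spDist_le_weight h) le_rfl)

lemma spDist_self_le (u : V) : spDist G w u u ≤ 0 := by
  simpa [walkWeight_nil] using spDist_le (w := w) (SimpleGraph.Walk.nil : G.Walk u u)

/-- Splitting lemma: a walk starting in `B` and ending in `A ∪ S` can be split at
its first visit to `S`. -/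
lemma splitB {A S B : Set V}
    (hAB : Disjoint A B) (hSB : Disjoint S B)
    (hcover : A ∪ S ∪ B = Set.univ)
    (hsep : ∀ a ∈ A, ∀ b ∈ B, ¬ G.Adj a b) :
    ∀ {x v : V} (p : G.Walk x v), x ∈ B → v ∈ A ∪ S →
      ∃ (s : V) (_ : s ∈ S) (r : G.Walk x s) (q : G.Walk s v),
        q.length < p.length ∧
        walkWeight w r + walkWeight w q ≤ walkWeight w p := by
  intro x v p
  induction p with
  | nil =>
    intro hx hv
    rcases hv with hv | hv
    · exact absurd hx (hAB.le_bot ⟨hv, ·⟩ : ¬ _)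
    · exact absurd hx (hSB.le_bot ⟨hv, ·⟩ : ¬ _)
  | @cons x y v e q ih =>
    intro hx hv
    by_cases hy : y ∈ A ∪ S
    · have hyS : y ∈ S := by
        rcases hy with hy | hy
        · exact absurd e.symm (hsep y hy x hx)
        · exact hy
      refine ⟨y, hyS, e.toWalk, q, Nat.lt_succ_self _, ?_⟩
      simp [SimpleGraph.Adj.toWalk, walkWeight_cons, walkWeight_nil]
    · have hyB : y ∈ B := by
        have : y ∈ A ∪ S ∪ B := by rw [hcover]; trivial
        rcases this with h | h
        · exact absurd h hy
        · exact h
      obtain ⟨s, hs, r, q', hlen, hwt⟩ := ih hyB hv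
      refine ⟨s, hs, SimpleGraph.Walk.cons e r, q', hlen.trans (Nat.lt_succ_self _), ?_⟩
      rw [walkWeight_cons, walkWeight_cons, add_assoc]
      exact add_le_add le_rfl hwt

end Aux

/-- If `(A, S, B)` is a separation of `G` and `Y = A ∪ S`, then the
shortest-path distance in `G^S[Y]` coincides with `d_G` on `Y`. -/
theorem stmt4 {V : Type*} (G : SimpleGraph V) (w : V → V → ℝ≥0∞)
    (hsymm : ∀ u v, w u v = w v u)
    (hpos : ∀ u v, G.Adj u v → 0 < w u v)
    (A S B : Set V)
    (hAS : Disjoint A S) (hAB : Disjoint A B) (hSB : Disjoint S B)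
    (hcover : A ∪ S ∪ B = Set.univ)
    (hsep : ∀ a ∈ A, ∀ b ∈ B, ¬ G.Adj a b) :
    ∀ u v : (A ∪ S : Set V),
      spDist (modGraph G S (A ∪ S)) (modWeight G w S (A ∪ S)) u v
        = spDist G w u v := by
  set Y : Set V := A ∪ S with hY
  set H := modGraph G S Y with hH
  set w' := modWeight G w S Y with hw'
  -- every modWeight is at least spDist in G
  have hw'_ge : ∀ a b : Y, H.Adj a b → spDist G w (a : V) (b : V) ≤ w' a b := by
    rintro a b ⟨hne, hadj | ⟨haS, hbS, hr⟩⟩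
    · by_cases hS : (a : V) ∈ S ∧ (b : V) ∈ S
      · simp [hw', modWeight, hS.1, hS.2]
      · simp only [hw', modWeight, if_neg hS]
        exact spDist_le_weight hadj
    · simp [hw', modWeight, haS, hbS]
  -- direction ≥ : spDist G ≤ spDist H
  have dir1 : ∀ u v : Y, spDist G w (u : V) (v : V) ≤ spDist H w' u v := by
    intro u v
    refine le_iInf fun p => ?_
    induction p with
    | nil => simpa [walkWeight_nil] using spDist_self_le (G := G) (w := w) _
    | @cons a b c h q ih =>
      rw [walkWeight_cons]
      calc spDist G w (a : V) (c : V)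
          ≤ spDist G w a b + spDist G w b c := spDist_triangle _ _ _
        _ ≤ w' a b + walkWeight w' q := add_le_add (hw'_ge a b h) ih
  -- direction ≤ : spDist H ≤ weight of any G-walk between points of Y
  have dir2 : ∀ n : ℕ, ∀ (u v : V) (hu : u ∈ Y) (hv : v ∈ Y) (p : G.Walk u v),
      p.length ≤ n → spDist H w' ⟨u, hu⟩ ⟨v, hv⟩ ≤ walkWeight w p := by
    intro n
    induction n with
    | zero =>
      intro u v hu hv p hlen
      cases p with
      | nil => simpa [walkWeight_nil] using spDist_self_le (G := H) (w := w') ⟨u, hu⟩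
      | cons h q => simp at hlen
    | succ n ih =>
      intro u v hu hv p hlen
      cases p with
      | nil => simpa [walkWeight_nil] using spDist_self_le (G := H) (w := w') ⟨u, hu⟩
      | @cons _ x _ e q =>
        have hqlen : q.length ≤ n := by
          simpa [Nat.succ_le_succ_iff] using hlen
        rw [walkWeight_cons]
        by_cases hx : x ∈ Y
        · have hadj : H.Adj ⟨u, hu⟩ ⟨x, hx⟩ :=
            ⟨fun h => e.ne (congrArg Subtype.val h), Or.inl e⟩
          have hle : w' ⟨u, hu⟩ ⟨x, hx⟩ ≤ w u x := by
            by_cases hS : u ∈ S ∧ x ∈ S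
            · simp only [hw', modWeight, if_pos hS]
              exact spDist_le_weight e
            · simp only [hw', modWeight, if_neg hS]; exact le_rfl
          calc spDist H w' ⟨u, hu⟩ ⟨v, hv⟩
              ≤ w' ⟨u, hu⟩ ⟨x, hx⟩ + spDist H w' ⟨x, hx⟩ ⟨v, hv⟩ := spDist_le_add hadj
            _ ≤ w u x + walkWeight w q := add_le_add hle (ih x v hx hv q hqlen)
        · have hxB : x ∈ B := by
            have : x ∈ A ∪ S ∪ B := by rw [hcover]; trivial
            rcases this with h | h
            · exact absurd h hx
            · exact h
          have huS : u ∈ S := by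
            rcases hu with hu | hu
            · exact absurd e (hsep u hu x hxB)
            · exact hu
          obtain ⟨s, hs, r, q', hlen', hwt⟩ := splitB hAB hSB hcover hsep q hxB hv
          have hsY : s ∈ Y := Or.inr hs
          have hq'len : q'.length ≤ n := le_of_lt (lt_of_lt_of_le hlen' hqlen)
          have ihq' : spDist H w' ⟨s, hsY⟩ ⟨v, hv⟩ ≤ walkWeight w q' :=
            ih s v hsY hv q' hq'len
          by_cases hus : u = s
          · subst hus
            calc spDist H w' ⟨u, hu⟩ ⟨v, hv⟩
                ≤ walkWeight w q' := by
                  convert ihq' using 2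
              _ ≤ walkWeight w r + walkWeight w q' := le_add_self
              _ ≤ walkWeight w q := hwt
              _ ≤ w u x + walkWeight w q := le_add_self
          · have hreach : G.Reachable u s := ⟨SimpleGraph.Walk.cons e r⟩
            have hadj : H.Adj ⟨u, hu⟩ ⟨s, hsY⟩ :=
              ⟨fun h => hus (congrArg Subtype.val h), Or.inr ⟨huS, hs, hreach⟩⟩
            have hws : w' ⟨u, hu⟩ ⟨s, hsY⟩ = spDist G w u s := by
              simp [hw', modWeight, huS, hs]
            calc spDist H w' ⟨u, hu⟩ ⟨v, hv⟩
                ≤ w' ⟨u, hu⟩ ⟨s, hsY⟩ + spDist H w' ⟨s, hsY⟩ ⟨v, hv⟩ := spDist_le_add hadj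
              _ = spDist G w u s + spDist H w' ⟨s, hsY⟩ ⟨v, hv⟩ := by rw [hws]
              _ ≤ (w u x + walkWeight w r) + walkWeight w q' := by
                  refine add_le_add ?_ ihq'
                  have := spDist_le (w := w) (SimpleGraph.Walk.cons e r)
                  rwa [walkWeight_cons] at this
              _ = w u x + (walkWeight w r + walkWeight w q') := by rw [add_assoc]
              _ ≤ w u x + walkWeight w q := add_le_add le_rfl hwt
  intro u v
  refine le_antisymm ?_ (dir1 u v)
  refine le_iInf fun p => ?_
  exact dir2 p.length u v u.2 v.2 p le_rfl
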